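/- arXiv:0907.2955 — 2 statements merged into one kernel-verified Lean document; each statement's English description precedes it below -/
import Mathlib

section
/- Suppose A satisfies the upper RIP bound of order K: ‖Ax‖₂ ≤ √(1+δ)‖x‖₂ for all K-sparse x. Then for every vector x ∈ ℂⁿ (not necessarily sparse), ‖Ax‖₂ ≤ √(1+δ)·(‖x‖₂ + ‖x‖₁/√K). -/
/-!
Sort the entries of `x` by decreasing modulus and cut them into consecutive blocks of `K`.
The first block has `ℓ₂` norm at most `‖x‖₂`. Every entry of a later block is at most the
average modulus of the previous block, so the later block has `ℓ₂` norm at most `√K` times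
that average, i.e. the previous block's `ℓ₁` norm divided by `√K`. Applying the RIP bound to
each block and the triangle inequality gives the claim.

Instead of sorting, the blocks are split off one at a time: after the first block, the
remaining vector has all entries bounded by some `a`, and by induction on its support its
image is at most `C (√K a + ‖·‖₁ / √K)`.
-/

open scoped BigOperators

/-- The Euclidean (ℓ₂) norm of a finitely indexed complex vector. -/
noncomputable def l2 {ι : Type*} [Fintype ι] (v : ι → ℂ) : ℝ :=
  Real.sqrt (∑ i, ‖v i‖ ^ 2)

/-- The ℓ₁ norm of a finitely indexed complex vector. -/
noncomputable def l1 {ι : Type*} [Fintype ι] (v : ι → ℂ) : ℝ :=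
  ∑ i, ‖v i‖

/-- A vector is `K`-sparse if it has at most `K` nonzero entries. -/
def Sparse {n : ℕ} (K : ℕ) (x : Fin n → ℂ) : Prop :=
  ∃ s : Finset (Fin n), s.card ≤ K ∧ ∀ i ∉ s, x i = 0

/-- `xK` is a best `K`-term approximation of `x`: it is `K`-sparse, agrees with `x`
on its support, and keeps the largest-magnitude entries. -/
def IsBestKApprox {n : ℕ} (K : ℕ) (x xK : Fin n → ℂ) : Prop :=
  Sparse K xK ∧ (∀ i, xK i ≠ 0 → xK i = x i) ∧
    (∀ i j, xK i ≠ 0 → xK j = 0 → ‖x j‖ ≤ ‖x i‖)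

open Finset

theorem Finset.exists_subset_card_eq_forall_le {α β : Type*} [DecidableEq α] [LinearOrder β]
    (g : α → β) {s : Finset α} {k : ℕ} (hk : k ≤ #s) :
    ∃ t ⊆ s, #t = k ∧ ∀ i ∈ t, ∀ j ∈ s \ t, g j ≤ g i := by
  induction k with
  | zero => exact ⟨∅, empty_subset s, card_empty, by simp⟩
  | succ k ih =>
    obtain ⟨t, hts, htk, htop⟩ := ih (Nat.le_of_succ_le hk)
    have hne : (s \ t).Nonempty := by
      rw [← card_pos, card_sdiff_of_subset hts]; omega
    obtain ⟨m, hm, hmax⟩ := exists_max_image (s \ t) g hne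
    refine ⟨insert m t, insert_subset (mem_sdiff.1 hm).1 hts, ?_, ?_⟩
    · rw [card_insert_of_notMem (mem_sdiff.1 hm).2, htk]
    · intro i hi j hj
      have hj' : j ∈ s \ t := sdiff_subset_sdiff subset_rfl (subset_insert m t) hj
      rcases mem_insert.1 hi with rfl | hit
      · exact hmax j hj'
      · exact htop i hit j hj'

section Norms

variable {ι : Type*} [Fintype ι]

theorem l1_nonneg (v : ι → ℂ) : 0 ≤ l1 v := sum_nonneg fun _ _ => norm_nonneg _

theorem l2_eq_norm_toLp (v : ι → ℂ) :
    l2 v = ‖(WithLp.toLp 2 v : EuclideanSpace ℂ ι)‖ := by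
  rw [EuclideanSpace.norm_eq]; rfl

theorem l2_add_le (u v : ι → ℂ) : l2 (u + v) ≤ l2 u + l2 v := by
  simp only [l2_eq_norm_toLp, WithLp.toLp_add]; exact norm_add_le _ _

theorem l2_indicator_le (T : Set ι) (v : ι → ℂ) : l2 (T.indicator v) ≤ l2 v := by
  unfold l2
  gcongr with i
  exact norm_indicator_le_norm_self v i

theorem l2_le_sqrt_card_mul {s : Finset ι} {v : ι → ℂ} {a : ℝ} (hv : ∀ i ∉ s, v i = 0)
    (ha0 : 0 ≤ a) (ha : ∀ i, ‖v i‖ ≤ a) : l2 v ≤ √(#s : ℝ) * a := by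
  have hsum : ∑ i, ‖v i‖ ^ 2 ≤ #s * a ^ 2 := by
    rw [← sum_subset (subset_univ s) fun i _ hi => by simp [hv i hi], ← nsmul_eq_mul]
    exact sum_le_card_nsmul _ _ _ fun i _ => pow_le_pow_left₀ (norm_nonneg _) (ha i) 2
  calc l2 v ≤ √(#s * a ^ 2) := Real.sqrt_le_sqrt hsum
    _ = √(#s : ℝ) * a := by rw [Real.sqrt_mul (Nat.cast_nonneg _), Real.sqrt_sq ha0]

theorem l1_indicator_add_l1_indicator_compl (T : Set ι) (v : ι → ℂ) :
    l1 (T.indicator v) + l1 (Tᶜ.indicator v) = l1 v := by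
  simp only [l1, ← sum_add_distrib, norm_indicator_eq_indicator_norm,
    Set.indicator_self_add_compl_apply]

theorem card_mul_le_l1_indicator {T : Finset ι} {v : ι → ℂ} {b : ℝ}
    (hb : ∀ i ∈ T, b ≤ ‖v i‖) : #T * b ≤ l1 ((T : Set ι).indicator v) := by
  calc #T * b ≤ ∑ i ∈ T, ‖v i‖ := by
        rw [← nsmul_eq_mul]; exact card_nsmul_le_sum _ _ _ hb
    _ = l1 ((T : Set ι).indicator v) := by
      simp only [l1, norm_indicator_eq_indicator_norm]
      rw [sum_indicator_subset _ (subset_univ T)]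

end Norms

theorem exists_card_eq_forall_norm_le {ι : Type*} [DecidableEq ι] {s : Finset ι} {x : ι → ℂ}
    (hx : ∀ i ∉ s, x i = 0) {k : ℕ} (hk : k ≤ #s) :
    ∃ T ⊆ s, #T = k ∧ ∀ i ∈ T, ∀ j ∉ T, ‖x j‖ ≤ ‖x i‖ := by
  obtain ⟨T, hTs, hTk, htop⟩ := exists_subset_card_eq_forall_le (fun i => ‖x i‖) hk
  refine ⟨T, hTs, hTk, fun i hi j hj => ?_⟩
  by_cases hjs : j ∈ s
  · exact htop i hi j (mem_sdiff.2 ⟨hjs, hj⟩)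
  · simp [hx j hjs]

theorem sparse_indicator {n K : ℕ} {T : Finset (Fin n)} (hT : #T ≤ K) (x : Fin n → ℂ) :
    Sparse K ((T : Set (Fin n)).indicator x) :=
  ⟨T, hT, fun _ hi => Set.indicator_of_notMem (mod_cast hi) x⟩

section SubadditiveBound

variable {n K : ℕ} {f : (Fin n → ℂ) → ℝ} {C : ℝ}

theorem le_l2_indicator_add_l1_div_sqrt_of_top (hK : 0 < K)
    (hadd : ∀ u v, f (u + v) ≤ f u + f v) (hsparse : ∀ v, Sparse K v → f v ≤ C * l2 v)
    {x : Fin n → ℂ} {T : Finset (Fin n)} (hT : #T = K)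
    (htop : ∀ i ∈ T, ∀ j ∉ T, ‖x j‖ ≤ ‖x i‖)
    (htail : ∀ a, 0 ≤ a → (∀ i, ‖(T : Set (Fin n))ᶜ.indicator x i‖ ≤ a) →
      f ((T : Set (Fin n))ᶜ.indicator x) ≤
        C * (√(K : ℝ) * a + l1 ((T : Set (Fin n))ᶜ.indicator x) / √(K : ℝ))) :
    f x ≤ C * (l2 ((T : Set (Fin n)).indicator x) + l1 x / √(K : ℝ)) := by
  set head := (T : Set (Fin n)).indicator x
  set tail := (T : Set (Fin n))ᶜ.indicator x
  have hKpos : (0 : ℝ) < K := Nat.cast_pos.2 hK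
  -- every tail entry is dominated by each of the `K` head entries, hence by their average
  have htail_le : ∀ j, ‖tail j‖ ≤ l1 head / K := by
    intro j
    by_cases hj : j ∈ T
    · simp [tail, hj, div_nonneg (l1_nonneg head) hKpos.le]
    · rw [le_div_iff₀ hKpos, mul_comm, ← hT]
      simpa [tail, hj] using card_mul_le_l1_indicator (htop · · j hj)
  have hsqrt : √(K : ℝ) * (l1 head / K) = l1 head / √(K : ℝ) := by
    field_simp
    rw [Real.sq_sqrt hKpos.le, mul_comm]
  calc f x = f (head + tail) := by rw [Set.indicator_self_add_compl]
    _ ≤ f head + f tail := hadd head tail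
    _ ≤ C * l2 head + C * (l1 head / √(K : ℝ) + l1 tail / √(K : ℝ)) := by
      rw [← hsqrt]
      exact add_le_add (hsparse _ (sparse_indicator hT.le x))
        (htail _ (div_nonneg (l1_nonneg head) hKpos.le) htail_le)
    _ = C * (l2 head + l1 x / √(K : ℝ)) := by
      rw [← l1_indicator_add_l1_indicator_compl (T : Set (Fin n)) x]; ring

theorem le_sqrt_mul_add_l1_div_sqrt_of_norm_le (hC : 0 ≤ C) (hK : 0 < K)
    (hadd : ∀ u v, f (u + v) ≤ f u + f v) (hsparse : ∀ v, Sparse K v → f v ≤ C * l2 v)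
    (x : Fin n → ℂ) {a : ℝ} (ha0 : 0 ≤ a)
    (ha : ∀ i, ‖x i‖ ≤ a) : f x ≤ C * (√(K : ℝ) * a + l1 x / √(K : ℝ)) := by
  suffices ∀ s : Finset (Fin n), ∀ x : Fin n → ℂ, (∀ i ∉ s, x i = 0) →
      ∀ a, 0 ≤ a → (∀ i, ‖x i‖ ≤ a) →
        f x ≤ C * (√(K : ℝ) * a + l1 x / √(K : ℝ)) from
    this univ x (by simp) a ha0 ha
  intro s
  induction s using Finset.strongInduction with
  | H s ih =>
  intro x hx a ha0 ha
  by_cases hsK : #s ≤ K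
  · calc f x ≤ C * l2 x := hsparse x ⟨s, hsK, hx⟩
      _ ≤ C * (√(K : ℝ) * a) := by
        gcongr
        exact (l2_le_sqrt_card_mul hx ha0 ha).trans (by gcongr)
      _ ≤ C * (√(K : ℝ) * a + l1 x / √(K : ℝ)) := by
        gcongr; exact le_add_of_nonneg_right (div_nonneg (l1_nonneg x) (Real.sqrt_nonneg _))
  obtain ⟨T, hTs, hTK, htop⟩ := exists_card_eq_forall_norm_le hx (le_of_not_ge hsK)
  have hsub : s \ T ⊂ s := sdiff_ssubset hTs (card_pos.1 (hTK ▸ hK))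
  have htail_supp : ∀ i ∉ s \ T, (T : Set (Fin n))ᶜ.indicator x i = 0 := by
    intro i hi
    by_cases hiT : i ∈ T
    · simp [hiT]
    · simp [hiT, hx i fun his => hi (mem_sdiff.2 ⟨his, hiT⟩)]
  calc f x ≤ C * (l2 ((T : Set (Fin n)).indicator x) + l1 x / √(K : ℝ)) :=
        le_l2_indicator_add_l1_div_sqrt_of_top hK hadd hsparse hTK htop (ih _ hsub _ htail_supp)
    _ ≤ C * (√(K : ℝ) * a + l1 x / √(K : ℝ)) := by
      gcongr
      refine (l2_le_sqrt_card_mul (s := T) (fun i hi => ?_) ha0 fun i => ?_).trans_eq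
        (by rw [hTK])
      · simp [hi]
      · exact (norm_indicator_le_norm_self x i).trans (ha i)

theorem le_l2_add_l1_div_sqrt (hC : 0 ≤ C) (hK : 0 < K) (hadd : ∀ u v, f (u + v) ≤ f u + f v)
    (hsparse : ∀ v, Sparse K v → f v ≤ C * l2 v) (x : Fin n → ℂ) :
    f x ≤ C * (l2 x + l1 x / √(K : ℝ)) := by
  by_cases hnK : n ≤ K
  · calc f x ≤ C * l2 x := hsparse x ⟨univ, by simpa using hnK, by simp⟩
      _ ≤ C * (l2 x + l1 x / √(K : ℝ)) := by
        gcongr; exact le_add_of_nonneg_right (div_nonneg (l1_nonneg x) (Real.sqrt_nonneg _))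
  obtain ⟨T, -, hTK, htop⟩ :=
    exists_card_eq_forall_norm_le (s := univ) (x := x) (by simp) (by simpa using le_of_not_ge hnK)
  calc f x ≤ C * (l2 ((T : Set (Fin n)).indicator x) + l1 x / √(K : ℝ)) :=
        le_l2_indicator_add_l1_div_sqrt_of_top hK hadd hsparse hTK htop fun _ ha0 ha =>
          le_sqrt_mul_add_l1_div_sqrt_of_norm_le hC hK hadd hsparse _ ha0 ha
    _ ≤ C * (l2 x + l1 x / √(K : ℝ)) := by gcongr; exact l2_indicator_le _ x

end SubadditiveBound

theorem image_of_arbitrary_signal_general {m n K : ℕ} (hK : 0 < K)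
    (A : Matrix (Fin m) (Fin n) ℂ) (δ : ℝ)
    (hRIP : ∀ x : Fin n → ℂ, Sparse K x →
      l2 (A.mulVec x) ≤ Real.sqrt (1 + δ) * l2 x) :
    ∀ x : Fin n → ℂ,
      l2 (A.mulVec x) ≤ Real.sqrt (1 + δ) * (l2 x + l1 x / Real.sqrt K) :=
  le_l2_add_l1_div_sqrt (Real.sqrt_nonneg _) hK
    (fun u v => by rw [Matrix.mulVec_add]; exact l2_add_le _ _) hRIP

/-- image of an arbitrary (not necessarily sparse) signal under a matrix
satisfying the upper RIP bound of order K. -/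
theorem image_of_arbitrary_signal {m n K : ℕ} (hK : 0 < K)
    (A : Matrix (Fin m) (Fin n) ℂ) (δ : ℝ) (hδ : 0 ≤ δ)
    (hRIP : ∀ x : Fin n → ℂ, Sparse K x →
      l2 (A.mulVec x) ≤ Real.sqrt (1 + δ) * l2 x) :
    ∀ x : Fin n → ℂ,
      l2 (A.mulVec x) ≤ Real.sqrt (1 + δ) * (l2 x + l1 x / Real.sqrt K) :=
  image_of_arbitrary_signal_general hK A δ hRIP
end

section
/- Suppose every 2K-column submatrix of E has largest singular value at most ε·√(1+δ) (equivalently, ‖Ev‖₂ ≤ ε√(1+δ)‖v‖₂ for all 2K-sparse v), where δ ∈ [0,1) is the RIC of order 2K of A and δ < √2/(1+ε)² - 1. Then ε√(1+δ) < 2^{1/4} - √(1+δ) and moreover 2^{1/4} - √(1+δ) < √(1-δ). Consequently ‖Ev‖₂ < √(1-δ)‖v‖₂ ≤ ‖Av‖₂ for all nonzero 2K-sparse v. -/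
open scoped BigOperators

/-- spectral part of Lemma 1 — the singular values of 2K-column
submatrices of E stay strictly below those of A. -/
theorem spectral_consequence {m n K : ℕ} (A E : Matrix (Fin m) (Fin n) ℂ) (δ ε : ℝ)
    (hδ0 : 0 ≤ δ) (hδ1 : δ < 1) (hε : 0 ≤ ε)
    (hA : ∀ v : Fin n → ℂ, Sparse (2 * K) v →
      Real.sqrt (1 - δ) * l2 v ≤ l2 (A.mulVec v))
    (hE : ∀ v : Fin n → ℂ, Sparse (2 * K) v →
      l2 (E.mulVec v) ≤ ε * Real.sqrt (1 + δ) * l2 v)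
    (hcond : δ < Real.sqrt 2 / (1 + ε) ^ 2 - 1) :
    ε * Real.sqrt (1 + δ) < Real.sqrt (Real.sqrt 2) - Real.sqrt (1 + δ) ∧
    Real.sqrt (Real.sqrt 2) - Real.sqrt (1 + δ) < Real.sqrt (1 - δ) ∧
    ∀ v : Fin n → ℂ, Sparse (2 * K) v → v ≠ 0 →
      l2 (E.mulVec v) < Real.sqrt (1 - δ) * l2 v ∧
      Real.sqrt (1 - δ) * l2 v ≤ l2 (A.mulVec v) := by
  have hε1 : (0:ℝ) < (1 + ε) ^ 2 := by positivity
  have h1δ : (0:ℝ) ≤ 1 + δ := by linarith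
  have hs1 : Real.sqrt (1 + δ) ^ 2 = 1 + δ := Real.sq_sqrt h1δ
  have hs2 : Real.sqrt (1 - δ) ^ 2 = 1 - δ := Real.sq_sqrt (by linarith)
  have hs3 : Real.sqrt 2 ^ 2 = 2 := Real.sq_sqrt (by norm_num)
  have hs2nn : 0 ≤ Real.sqrt (1 - δ) := Real.sqrt_nonneg _
  have hs1nn : 0 ≤ Real.sqrt (1 + δ) := Real.sqrt_nonneg _
  have hprod : (1 + ε) ^ 2 * (1 + δ) < Real.sqrt 2 := by
    have h : 1 + δ < Real.sqrt 2 / (1 + ε) ^ 2 := by linarith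
    have := (lt_div_iff₀ hε1).mp h
    nlinarith [this]
  have key : (1 + ε) * Real.sqrt (1 + δ) < Real.sqrt (Real.sqrt 2) := by
    rw [show Real.sqrt (Real.sqrt 2) = Real.sqrt (Real.sqrt 2) from rfl]
    have hx : 0 ≤ (1 + ε) * Real.sqrt (1 + δ) := by positivity
    rw [show (1 + ε) * Real.sqrt (1 + δ) = Real.sqrt ((1 + ε) ^ 2 * (1 + δ)) by
      rw [Real.sqrt_mul (by positivity), Real.sqrt_sq (by linarith)]]
    exact Real.sqrt_lt_sqrt (by positivity) hprod
  have first : ε * Real.sqrt (1 + δ) < Real.sqrt (Real.sqrt 2) - Real.sqrt (1 + δ) := by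
    nlinarith [key]
  have second : Real.sqrt (Real.sqrt 2) - Real.sqrt (1 + δ) < Real.sqrt (1 - δ) := by
    have hsum : Real.sqrt (Real.sqrt 2) < Real.sqrt (1 - δ) + Real.sqrt (1 + δ) := by
      have h2 : Real.sqrt 2 < (Real.sqrt (1 - δ) + Real.sqrt (1 + δ)) ^ 2 := by
        have hnn : 0 ≤ Real.sqrt (1 - δ) * Real.sqrt (1 + δ) := by positivity
        have h24 : Real.sqrt 2 < 2 := by
          nlinarith [Real.sq_sqrt (show (0:ℝ) ≤ 2 by norm_num), Real.sqrt_nonneg (2:ℝ)]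
        nlinarith [h24, hnn, hs1, hs2]
      calc Real.sqrt (Real.sqrt 2)
          < Real.sqrt ((Real.sqrt (1 - δ) + Real.sqrt (1 + δ)) ^ 2) :=
            Real.sqrt_lt_sqrt (Real.sqrt_nonneg 2) h2
        _ = Real.sqrt (1 - δ) + Real.sqrt (1 + δ) := Real.sqrt_sq (by positivity)
    linarith
  refine ⟨first, second, fun v hv hv0 => ?_⟩
  have hl2pos : 0 < l2 v := by
    obtain ⟨i, hi⟩ : ∃ i, v i ≠ 0 := by
      by_contra h
      push_neg at h
      exact hv0 (funext h)
    have : 0 < ∑ j, ‖v j‖ ^ 2 := by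
      apply Finset.sum_pos' (fun j _ => by positivity)
      exact ⟨i, Finset.mem_univ i, pow_pos (norm_pos_iff.mpr hi) 2⟩
    exact Real.sqrt_pos.mpr this
  refine ⟨?_, hA v hv⟩
  calc l2 (E.mulVec v) ≤ ε * Real.sqrt (1 + δ) * l2 v := hE v hv
    _ < Real.sqrt (1 - δ) * l2 v := by
        apply mul_lt_mul_of_pos_right _ hl2pos
        linarith [first, second]
end
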